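/- Let X be a non-deterministic infinite exchangeable sequence of {0,1}-valued random variables whose de Finetti measure γ is not a Dirac mass (i.e., X is not i.i.d.). Suppose there exist real sequences (a_n)_{n≥1} and (b_n)_{n≥1} such that for every n ≥ 1 and every p = 0,…,n, the predictive probability P^n_{n+1}(0^(p) | 0^(p)) equals a_n·p + b_n. Then γ is a Beta(α,β) distribution for some α, β > 0. -/

import Mathlib

open MeasureTheory

namespace HoeffdingUrn

variable {Ω : Type} [MeasurableSpace Ω]

/-- `X` is an exchangeable sequence under `μ`: each `X i` is measurable and, for every `n`
and every permutation `π` of `{0,…,n-1}`, the law of `(X_{π 0},…,X_{π (n-1)})` coincides with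
the law of `(X_0,…,X_{n-1})`. -/
def Exchangeable {D : Type} [MeasurableSpace D] (X : ℕ → Ω → D) (μ : Measure Ω) : Prop :=
  (∀ i, Measurable (X i)) ∧
  ∀ (n : ℕ) (π : Equiv.Perm (Fin n)),
    Measure.map (fun ω (i : Fin n) => X ((π i : Fin n) : ℕ) ω) μ =
      Measure.map (fun ω (i : Fin n) => X (i : ℕ) ω) μ

/-- probability that the first `n` variables equal the vector `x`. -/
noncomputable def cylProb {D : Type} (X : ℕ → Ω → D) (μ : Measure Ω) {n : ℕ}
    (x : Fin n → D) : ℝ :=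
  (μ {ω | ∀ i : Fin n, X (i : ℕ) ω = x i}).toReal

/-- `X` is non-deterministic: every finite configuration has positive probability. -/
def NonDeterministic {D : Type} (X : ℕ → Ω → D) (μ : Measure Ω) : Prop :=
  ∀ n : ℕ, 1 ≤ n → ∀ x : Fin n → D, 0 < cylProb X μ x

/-- the canonical vector of `{0,1}ⁿ` (with `false` = 0) containing exactly `j` zeros. -/
def zeroVec (n j : ℕ) : Fin n → Bool := fun i => decide (j ≤ (i : ℕ))

/-- number of zeros (`false` entries) in a Boolean vector. -/
def zeroCountVec {n : ℕ} (x : Fin n → Bool) : ℕ :=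
  (Finset.univ.filter fun i => x i = false).card

/-- `P_n(0^{(j)})`: the common probability of any configuration of `(X_1,…,X_n)` with
exactly `j` zeros. -/
noncomputable def Pz (X : ℕ → Ω → Bool) (μ : Measure Ω) (n j : ℕ) : ℝ :=
  cylProb X μ (zeroVec n j)

/-- number of zeros among the first `n` variables. -/
def zeroCount (X : ℕ → Ω → Bool) (n : ℕ) (ω : Ω) : ℕ :=
  zeroCountVec (fun i : Fin n => X (i : ℕ) ω)

/-- `P^n_{n+v}(0^{(b)} ∣ 0^{(a)})`: conditional probability that `(X_1,…,X_{n+v})`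
contains exactly `b` zeros given that `(X_1,…,X_n)` contains exactly `a` zeros. -/
noncomputable def condP (X : ℕ → Ω → Bool) (μ : Measure Ω) (n v b a : ℕ) : ℝ :=
  (μ {ω | zeroCount X (n + v) ω = b ∧ zeroCount X n ω = a}).toReal /
    (μ {ω | zeroCount X n ω = a}).toReal

/-- a symmetric function of `k` variables. -/
def SymmFun {D : Type} {k : ℕ} (φ : (Fin k → D) → ℝ) : Prop :=
  ∀ (π : Equiv.Perm (Fin k)) (x : Fin k → D), φ (x ∘ π) = φ x

open Classical in
/-- the symmetric `U`-statistic with kernel `φ` of order `k`, based on `(X_1,…,X_n)`: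
`F = ∑_{1 ≤ j₁ < … < j_k ≤ n} φ(X_{j₁},…,X_{j_k})`. -/
noncomputable def Ustat {D : Type} (X : ℕ → Ω → D) (n : ℕ) {k : ℕ}
    (φ : (Fin k → D) → ℝ) : Ω → ℝ :=
  fun ω => ∑ j : Fin k → Fin n, if StrictMono j then φ (fun i => X ((j i : Fin n) : ℕ) ω) else 0

/-- complete degeneracy of the kernel `φ` of order `k`:
`E[φ(X_1,…,X_k) ∣ X_2,…,X_k] = 0` a.s. -/
def Degenerate {D : Type} [MeasurableSpace D] (X : ℕ → Ω → D) (μ : Measure Ω) {k : ℕ}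
    (φ : (Fin k → D) → ℝ) : Prop :=
  μ[(fun ω => φ (fun i => X (i : ℕ) ω)) |
      MeasurableSpace.comap (fun ω (i : Fin (k - 1)) => X ((i : ℕ) + 1) ω) inferInstance]
    =ᵐ[μ] 0

/-- `X` is Hoeffding decomposable: for every `n ≥ 2` and `1 ≤ k ≤ n`, a symmetric
`U`-statistic of order `k` based on `(X_1,…,X_n)` is orthogonal to `SU_{k-1}(X_{[n]})`
(equivalently, lies in `SH_k(X_{[n]})`) if and only if its kernel is completely degenerate. -/
def HoeffdingDecomposable {D : Type} [MeasurableSpace D] (X : ℕ → Ω → D) (μ : Measure Ω) :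
    Prop :=
  ∀ n : ℕ, 2 ≤ n → ∀ k : ℕ, 1 ≤ k → k ≤ n → ∀ φ : (Fin k → D) → ℝ, SymmFun φ →
    ((∀ ψ : (Fin (k - 1) → D) → ℝ, SymmFun ψ →
        ∫ ω, Ustat X n φ ω * Ustat X n ψ ω ∂μ = 0) ↔ Degenerate X μ φ)

/-- the symmetric Hoeffding spaces `SH_k(X_{[n]})`, `n ≥ 2`, `1 ≤ k ≤ n`, are all
non-trivial: each contains a `U`-statistic which is not a.s. zero. -/
def SHNontrivial {D : Type} (X : ℕ → Ω → D) (μ : Measure Ω) : Prop :=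
  ∀ n : ℕ, 2 ≤ n → ∀ k : ℕ, 1 ≤ k → k ≤ n →
    ∃ φ : (Fin k → D) → ℝ, SymmFun φ ∧
      (∀ ψ : (Fin (k - 1) → D) → ℝ, SymmFun ψ →
        ∫ ω, Ustat X n φ ω * Ustat X n ψ ω ∂μ = 0) ∧
      ∫ ω, (Ustat X n φ ω) ^ 2 ∂μ ≠ 0

/-- canonical symmetrization of a function of `m` variables. -/
noncomputable def symmetrize {D : Type} {m : ℕ} (f : (Fin m → D) → ℝ) : (Fin m → D) → ℝ :=
  fun x => (∑ π : Equiv.Perm (Fin m), f (x ∘ π)) / (Nat.factorial m : ℝ)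

/-- the vector `(y_1,…,y_u,x_1,…,x_{n-u})` of length `n` (for `1 ≤ u ≤ n`). -/
noncomputable def headTail {D : Type} [Nonempty D] (u n : ℕ) (y : Fin u → D)
    (x : Fin (n - 1) → D) : Fin n → D :=
  fun i =>
    if h : (i : ℕ) < u then y ⟨i, h⟩
    else if h2 : (i : ℕ) - u < n - 1 then x ⟨(i : ℕ) - u, h2⟩
    else Classical.arbitrary D

/-- `[T]^{(n-u)}_{n,n-1}`: the (version of the) conditional expectation
`E[T(X_1,…,X_n) ∣ X_{u+1},…,X_{u+n-1}]`, viewed as a function on `D^{n-1}`. -/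
noncomputable def condProj {D : Type} [Fintype D] [Nonempty D] (X : ℕ → Ω → D)
    (μ : Measure Ω) (n u : ℕ) (T : (Fin n → D) → ℝ) : (Fin (n - 1) → D) → ℝ :=
  fun x =>
    (∑ y : Fin u → D, T (headTail u n y x) * cylProb X μ (Fin.append y x)) / cylProb X μ x

/-- `X` is weakly independent: for every `n ≥ 2`, every symmetric `T : D^n → ℝ` with
`[T]^{(n-1)}_{n,n-1}(X_2,…,X_n) = 0` a.s. satisfies, for every `u = 2,…,n`,
`tilde-[T]^{(n-u)}_{n,n-1}(X_{u+1},…,X_{u+n-1}) = 0` a.s. -/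
def WeaklyIndependent {D : Type} [Fintype D] [Nonempty D] (X : ℕ → Ω → D)
    (μ : Measure Ω) : Prop :=
  ∀ n : ℕ, 2 ≤ n → ∀ T : (Fin n → D) → ℝ, SymmFun T →
    (∀ᵐ ω ∂μ, condProj X μ n 1 T (fun i : Fin (n - 1) => X ((i : ℕ) + 1) ω) = 0) →
    ∀ u : ℕ, 2 ≤ u → u ≤ n →
      ∀ᵐ ω ∂μ, symmetrize (condProj X μ n u T) (fun i : Fin (n - 1) => X (u + (i : ℕ)) ω) = 0

/-- `γ` is the de Finetti measure of the `{0,1}`-valued exchangeable sequence `X`. -/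
def IsDeFinettiMeasure (X : ℕ → Ω → Bool) (μ : Measure Ω) (γ : Measure ℝ) : Prop :=
  IsProbabilityMeasure γ ∧ γ (Set.Icc (0 : ℝ) 1)ᶜ = 0 ∧
  ∀ (n : ℕ) (x : Fin n → Bool),
    cylProb X μ x =
      ∫ θ, θ ^ (Finset.univ.filter fun i => x i = true).card *
        (1 - θ) ^ (Finset.univ.filter fun i => x i = false).card ∂γ

/-- the `n`-th moment of a measure on `[0,1] ⊆ ℝ`. -/
noncomputable def momentOf (γ : Measure ℝ) (n : ℕ) : ℝ := ∫ θ, θ ^ n ∂γ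

/-- the Beta(a,b) distribution on `[0,1]`, with density `θ^{a-1}(1-θ)^{b-1}/B(a,b)`. -/
noncomputable def betaMeasure (a b : ℝ) : Measure ℝ :=
  (volume.restrict (Set.Ioo (0 : ℝ) 1)).withDensity fun θ =>
    ENNReal.ofReal (θ ^ (a - 1) * (1 - θ) ^ (b - 1) /
      ∫ t in Set.Ioo (0 : ℝ) 1, t ^ (a - 1) * (1 - t) ^ (b - 1))

/-- the canonical completely degenerate kernel `φ_n^{(0)}` of order `n`:
`φ_n^{(0)}(0^{(k)}) = (-1)^k P_n(0^{(0)}) / P_n(0^{(k)})`. -/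
noncomputable def phi0 (X : ℕ → Ω → Bool) (μ : Measure Ω) (n : ℕ) :
    (Fin n → Bool) → ℝ :=
  fun x => (-1 : ℝ) ^ zeroCountVec x * (Pz X μ n 0 / Pz X μ n (zeroCountVec x))

/-- `f` is separately symmetric in its first `v` and last `m - v` variables. -/
def SepSymm {m : ℕ} (v : ℕ) (f : (Fin m → Bool) → ℝ) : Prop :=
  ∀ π : Equiv.Perm (Fin m), (∀ i : Fin m, (i : ℕ) < v ↔ ((π i : Fin m) : ℕ) < v) →
    ∀ x : Fin m → Bool, f (x ∘ π) = f x

/-- the canonical vector of `{0,1}^m` whose first `v` coordinates contain exactly `k`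
zeros and whose last `m - v` coordinates contain exactly `l` zeros. -/
def blockVec (m v k l : ℕ) : Fin m → Bool :=
  fun i => if (i : ℕ) < v then decide (k ≤ (i : ℕ)) else decide (l ≤ (i : ℕ) - v)

/-- `X` is an urn process in the sense of Hill, Lane and Sudderth: there are a measurable
`f : [0,1] → [0,1]` and positive integers `r`, `b` with
`P(X_{n+1} = 1 ∣ X_1,…,X_n) = f((r + X_1 + … + X_n)/(r + b + n))` a.s. for every `n ≥ 1`. -/
def IsUrnProcess (X : ℕ → Ω → Bool) (μ : Measure Ω) : Prop :=
  ∃ (f : ℝ → ℝ) (r b : ℕ), Measurable f ∧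
    Set.MapsTo f (Set.Icc (0 : ℝ) 1) (Set.Icc (0 : ℝ) 1) ∧ 0 < r ∧ 0 < b ∧
    ∀ n : ℕ, 1 ≤ n →
      (μ[(fun ω => if X n ω = true then (1 : ℝ) else 0) |
          MeasurableSpace.comap (fun ω (i : Fin n) => X (i : ℕ) ω) inferInstance]
        =ᵐ[μ] fun ω =>
          f (((r : ℝ) + ∑ i : Fin n, (if X (i : ℕ) ω = true then (1 : ℝ) else 0)) /
            ((r : ℝ) + (b : ℝ) + (n : ℝ))))


/-!
Under the de Finetti representation, the predictive probability of a one after `s` ones and `t`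
zeros is `r(s,t) = M(s+1,t) / M(s,t)` with `M(s,t) = ∫ θ^s (1-θ)^t dγ`, and Pascal's rule
`M(s,t) = M(s+1,t) + M(s,t+1)` becomes the consistency relation
`r(s,t) = r(s+1,t) r(s,t) + r(s,t+1) (1 - r(s,t))` between the levels `s + t = n` and `n + 1`.
As `γ` has positive variance, `r(0,1) < r(1,0)`, so the two values at level `1` are those of the
Pólya urn rule `(α + s) / (α + β + s + t)` for some `α, β > 0`. If `r` follows this rule at level
`n ≥ 1` and is affine in `t` at level `n + 1`, the consistency relation at two points of level `n`
determines the two coefficients, and they are those of the Pólya rule; the relation also carries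
the rule down to level `0`. Hence `∫ θ^(n+1) dγ = (α + n) / (α + β + n) · ∫ θ^n dγ`, the recursion
of the moments of Beta(α,β), and a probability measure on `[0,1]` is determined by its moments.
-/

section UnitIntervalSupport

variable {γ : Measure ℝ}

lemma integrable_of_ae_mem_Icc [IsFiniteMeasure γ] (hγ : ∀ᵐ θ ∂γ, θ ∈ Set.Icc (0 : ℝ) 1)
    {f : ℝ → ℝ} (hf : Continuous f) : Integrable f γ := by
  obtain ⟨C, hC⟩ := (isCompact_Icc (a := (0 : ℝ)) (b := 1)).exists_bound_of_continuousOn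
    hf.continuousOn
  exact Integrable.mono' (integrable_const C) hf.aestronglyMeasurable
    (hγ.mono fun θ hθ => hC θ hθ)

lemma integral_eval_eq_of_momentOf_eq {ν : Measure ℝ} [IsFiniteMeasure γ] [IsFiniteMeasure ν]
    (hγ : ∀ᵐ θ ∂γ, θ ∈ Set.Icc (0 : ℝ) 1) (hν : ∀ᵐ θ ∂ν, θ ∈ Set.Icc (0 : ℝ) 1)
    (h : ∀ n, momentOf γ n = momentOf ν n) (p : Polynomial ℝ) :
    ∫ θ, p.eval θ ∂γ = ∫ θ, p.eval θ ∂ν := by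
  have integral_eval (m : Measure ℝ) [IsFiniteMeasure m] (hm : ∀ᵐ θ ∂m, θ ∈ Set.Icc (0 : ℝ) 1) :
      ∫ θ, p.eval θ ∂m = ∑ i ∈ Finset.range (p.natDegree + 1), p.coeff i * momentOf m i := by
    simp_rw [Polynomial.eval_eq_sum_range, momentOf, ← integral_const_mul]
    exact integral_finsetSum _ fun i _ => integrable_of_ae_mem_Icc hm (by fun_prop)
  simp only [integral_eval γ hγ, integral_eval ν hν, h]

lemma abs_integral_sub_le_of_ae_mem_Icc [IsProbabilityMeasure γ]
    (hγ : ∀ᵐ θ ∂γ, θ ∈ Set.Icc (0 : ℝ) 1) {f g : ℝ → ℝ} (hf : Continuous f) (hg : Continuous g)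
    {ε : ℝ} (hfg : ∀ θ ∈ Set.Icc (0 : ℝ) 1, |f θ - g θ| ≤ ε) :
    |∫ θ, f θ ∂γ - ∫ θ, g θ ∂γ| ≤ ε := by
  rw [← integral_sub (integrable_of_ae_mem_Icc hγ hf) (integrable_of_ae_mem_Icc hγ hg),
    ← Real.norm_eq_abs]
  simpa using norm_integral_le_of_norm_le_const (μ := γ) (f := fun θ => f θ - g θ)
    (hγ.mono fun θ hθ => hfg θ hθ)

lemma integral_eq_of_momentOf_eq {ν : Measure ℝ} [IsProbabilityMeasure γ]
    [IsProbabilityMeasure ν]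
    (hγ : ∀ᵐ θ ∂γ, θ ∈ Set.Icc (0 : ℝ) 1) (hν : ∀ᵐ θ ∂ν, θ ∈ Set.Icc (0 : ℝ) 1)
    (h : ∀ n, momentOf γ n = momentOf ν n) {f : ℝ → ℝ} (hf : Continuous f) :
    ∫ θ, f θ ∂γ = ∫ θ, f θ ∂ν := by
  refine eq_of_forall_dist_le fun ε hε => ?_
  obtain ⟨p, hp⟩ := exists_polynomial_near_of_continuousOn 0 1 f hf.continuousOn (ε / 2)
    (half_pos hε)
  have hfp : ∀ θ ∈ Set.Icc (0 : ℝ) 1, |f θ - p.eval θ| ≤ ε / 2 := fun θ hθ => by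
    rw [abs_sub_comm]; exact (hp θ hθ).le
  have hγp := abs_integral_sub_le_of_ae_mem_Icc hγ hf p.continuous hfp
  have hνp := abs_integral_sub_le_of_ae_mem_Icc hν hf p.continuous hfp
  rw [← integral_eval_eq_of_momentOf_eq hγ hν h p] at hνp
  rw [Real.dist_eq]
  calc |∫ θ, f θ ∂γ - ∫ θ, f θ ∂ν|
      ≤ |∫ θ, f θ ∂γ - ∫ θ, p.eval θ ∂γ| + |∫ θ, f θ ∂ν - ∫ θ, p.eval θ ∂γ| := by
        rw [abs_sub_comm (∫ θ, f θ ∂ν)]; exact abs_sub_le _ _ _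
    _ ≤ ε := by linarith

lemma ext_of_momentOf_eq {ν : Measure ℝ} [IsProbabilityMeasure γ] [IsProbabilityMeasure ν]
    (hγ : ∀ᵐ θ ∂γ, θ ∈ Set.Icc (0 : ℝ) 1) (hν : ∀ᵐ θ ∂ν, θ ∈ Set.Icc (0 : ℝ) 1)
    (h : ∀ n, momentOf γ n = momentOf ν n) : γ = ν :=
  ext_of_forall_integral_eq_of_IsFiniteMeasure fun f =>
    integral_eq_of_momentOf_eq hγ hν h f.continuous

end UnitIntervalSupport

open ProbabilityTheory in
lemma sq_integral_lt_integral_sq {γ : Measure ℝ} [IsProbabilityMeasure γ] (hγ : MemLp id 2 γ)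
    (hγ_ne : ¬∃ x : ℝ, γ = Measure.dirac x) : (∫ θ, θ ∂γ) ^ 2 < ∫ θ, θ ^ 2 ∂γ := by
  have hvar : variance id γ ≠ 0 := fun hvar => hγ_ne ⟨_, by
    simpa using (hasLaw_dirac_of_ae_eq (ae_eq_integral_of_variance_eq_zero hγ hvar)).map_eq⟩
  have hvar_pos := (variance_nonneg id γ).lt_of_ne' hvar
  rw [variance_eq_sub hγ] at hvar_pos
  simpa using hvar_pos

noncomputable def mixedMoment (γ : Measure ℝ) (s t : ℕ) : ℝ := ∫ θ, θ ^ s * (1 - θ) ^ t ∂γ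

/-- `P(X_{n+1} = 1 ∣ s ones and t zeros among X_1,…,X_n)`, `n = s + t`, when `γ` is the
de Finetti measure. -/
noncomputable def predictive (γ : Measure ℝ) (s t : ℕ) : ℝ :=
  mixedMoment γ (s + 1) t / mixedMoment γ s t

noncomputable def polyaPredictive (α β : ℝ) (s t : ℕ) : ℝ := (α + s) / (α + β + s + t)

section MixedMoment

variable {γ : Measure ℝ}

lemma mixedMoment_eq_add [IsFiniteMeasure γ] (hγ : ∀ᵐ θ ∂γ, θ ∈ Set.Icc (0 : ℝ) 1) (s t : ℕ) :
    mixedMoment γ s t = mixedMoment γ (s + 1) t + mixedMoment γ s (t + 1) := by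
  rw [mixedMoment, mixedMoment, mixedMoment,
    ← integral_add (integrable_of_ae_mem_Icc hγ (by fun_prop))
      (integrable_of_ae_mem_Icc hγ (by fun_prop))]
  congr 1 with θ
  ring

lemma mixedMoment_zero_right (n : ℕ) : mixedMoment γ n 0 = momentOf γ n := by
  simp [mixedMoment, momentOf]

lemma mixedMoment_succ_left {s t : ℕ} (h : mixedMoment γ s t ≠ 0) :
    mixedMoment γ (s + 1) t = predictive γ s t * mixedMoment γ s t :=
  (div_mul_cancel₀ _ h).symm

lemma predictive_consistency [IsFiniteMeasure γ] (hγ : ∀ᵐ θ ∂γ, θ ∈ Set.Icc (0 : ℝ) 1)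
    (hpos : ∀ s t, 0 < mixedMoment γ s t) (s t : ℕ) :
    predictive γ s t = predictive γ (s + 1) t * predictive γ s t +
      predictive γ s (t + 1) * (1 - predictive γ s t) := by
  have h₁ := mixedMoment_succ_left (hpos s t).ne'
  have h₂ := mixedMoment_succ_left (hpos (s + 1) t).ne'
  have h₃ := mixedMoment_succ_left (hpos s (t + 1)).ne'
  have hst := mixedMoment_eq_add hγ s t
  have hs₁t := mixedMoment_eq_add hγ (s + 1) t
  refine mul_right_cancel₀ (hpos s t).ne' ?_
  linear_combination (predictive γ (s + 1) t - predictive γ s (t + 1) - 1) * h₁ + hs₁t + h₂ + h₃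
    - predictive γ s (t + 1) * hst

lemma predictive_pos (hpos : ∀ s t, 0 < mixedMoment γ s t) (s t : ℕ) :
    0 < predictive γ s t :=
  div_pos (hpos _ _) (hpos _ _)

lemma predictive_lt_one [IsFiniteMeasure γ]
    (hγ : ∀ᵐ θ ∂γ, θ ∈ Set.Icc (0 : ℝ) 1) (hpos : ∀ s t, 0 < mixedMoment γ s t) (s t : ℕ) :
    predictive γ s t < 1 := by
  rw [predictive, div_lt_one (hpos s t), mixedMoment_eq_add hγ s t]
  linarith [hpos s (t + 1)]

lemma predictive_zero_one_lt_predictive_one_zero [IsProbabilityMeasure γ]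
    (hγ : ∀ᵐ θ ∂γ, θ ∈ Set.Icc (0 : ℝ) 1) (hpos : ∀ s t, 0 < mixedMoment γ s t)
    (hγ_ne : ¬∃ x : ℝ, γ = Measure.dirac x) : predictive γ 0 1 < predictive γ 1 0 := by
  have hL2 : MemLp id 2 γ := MemLp.of_bound aestronglyMeasurable_id 1 <|
    hγ.mono fun θ hθ => by simpa [abs_le] using ⟨by linarith [hθ.1], hθ.2⟩
  have hvar := sq_integral_lt_integral_sq hL2 hγ_ne
  have h₀₀ : mixedMoment γ 0 0 = 1 := by simp [mixedMoment]
  have h₁₀ : mixedMoment γ 1 0 = ∫ θ, θ ∂γ := by simp [mixedMoment]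
  have h₂₀ : mixedMoment γ 2 0 = ∫ θ, θ ^ 2 ∂γ := by simp [mixedMoment]
  have h₀₁ : mixedMoment γ 0 1 = 1 - ∫ θ, θ ∂γ := by linarith [mixedMoment_eq_add hγ 0 0]
  have h₁₁ : mixedMoment γ 1 1 = ∫ θ, θ ∂γ - ∫ θ, θ ^ 2 ∂γ := by
    linarith [mixedMoment_eq_add hγ 1 0]
  rw [predictive, predictive, div_lt_div_iff₀ (hpos 0 1) (hpos 1 0), h₀₁, h₁₁, h₁₀, h₂₀]
  nlinarith

lemma predictive_succ_right_eq [IsFiniteMeasure γ] (hγ : ∀ᵐ θ ∂γ, θ ∈ Set.Icc (0 : ℝ) 1)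
    (hpos : ∀ s t, 0 < mixedMoment γ s t) {s t : ℕ} {c : ℝ}
    (hc : predictive γ s (t + 1) - predictive γ (s + 1) t = c) :
    predictive γ s (t + 1) = (1 + c) * predictive γ s t := by
  linear_combination -predictive_consistency hγ hpos s t + predictive γ s t * hc

lemma predictive_eq_polyaPredictive_of_succ [IsFiniteMeasure γ]
    (hγ : ∀ᵐ θ ∂γ, θ ∈ Set.Icc (0 : ℝ) 1) (hpos : ∀ s t, 0 < mixedMoment γ s t)
    {α β : ℝ} (hαβ : 0 < α + β) {s t : ℕ}
    (hs : predictive γ (s + 1) t = polyaPredictive α β (s + 1) t)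
    (ht : predictive γ s (t + 1) = polyaPredictive α β s (t + 1)) :
    predictive γ s t = polyaPredictive α β s t := by
  have h := predictive_succ_right_eq hγ hpos (by rw [hs, ht])
  rw [ht, polyaPredictive, polyaPredictive] at h
  rw [polyaPredictive]
  push_cast at h
  field_simp at h ⊢
  refine mul_left_cancel₀ (by positivity : α + β + s + t + 1 ≠ 0) ?_
  linear_combination -h

lemma predictive_eq_polyaPredictive_of_linear [IsFiniteMeasure γ]
    (hγ : ∀ᵐ θ ∂γ, θ ∈ Set.Icc (0 : ℝ) 1) (hpos : ∀ s t, 0 < mixedMoment γ s t)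
    {α β a b : ℝ} (hαβ : 0 < α + β) {m : ℕ}
    (hpolya : ∀ s t, s + t = m + 1 → predictive γ s t = polyaPredictive α β s t)
    (hlin : ∀ s t, s + t = m + 2 → predictive γ s t = a * t + b) :
    ∀ s t, s + t = m + 2 → predictive γ s t = polyaPredictive α β s t := by
  have hslope : ∀ s t, s + t = m + 1 → predictive γ s (t + 1) - predictive γ (s + 1) t = a :=
    fun s t hst => by
      rw [hlin s (t + 1) (by omega), hlin (s + 1) t (by omega)]
      push_cast
      ring
  have h₀ := predictive_succ_right_eq hγ hpos (hslope (m + 1) 0 rfl)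
  have h₁ := predictive_succ_right_eq hγ hpos (hslope m 1 (by omega))
  rw [hlin (m + 1) 1 (by omega), hpolya (m + 1) 0 rfl, polyaPredictive] at h₀
  rw [hlin m 2 (by omega), hpolya m 1 (by omega), polyaPredictive] at h₁
  have hS : 0 < α + β + m + 1 := by positivity
  push_cast at h₀ h₁
  field_simp at h₀ h₁
  intro s t hst
  have hst' : (s : ℝ) + t = m + 2 := by exact_mod_cast hst
  have ha : a * (α + β + m + 2) = -1 := by linear_combination h₁ - h₀
  have hb : b * (α + β + m + 2) = α + m + 2 := by
    refine mul_left_cancel₀ hS.ne' ?_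
    linear_combination (α + m + 1 - (α + β + m + 1)) * ha + (α + β + m + 2) * h₀
  rw [hlin s t hst, polyaPredictive, eq_div_iff (by positivity)]
  linear_combination (t : ℝ) * ha + hb + (a * t + b - 1) * hst'

lemma predictive_eq_polyaPredictive [IsFiniteMeasure γ]
    (hγ : ∀ᵐ θ ∂γ, θ ∈ Set.Icc (0 : ℝ) 1) (hpos : ∀ s t, 0 < mixedMoment γ s t)
    {a b : ℕ → ℝ} (hlin : ∀ s t, 1 ≤ s + t → predictive γ s t = a (s + t) * t + b (s + t))
    {α β : ℝ} (hαβ : 0 < α + β) (h₁₀ : predictive γ 1 0 = polyaPredictive α β 1 0)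
    (h₀₁ : predictive γ 0 1 = polyaPredictive α β 0 1) (s t : ℕ) :
    predictive γ s t = polyaPredictive α β s t := by
  have hlevel : ∀ m s t, s + t = m + 1 → predictive γ s t = polyaPredictive α β s t := by
    intro m
    induction m with
    | zero =>
      intro s t hst
      obtain ⟨rfl, rfl⟩ | ⟨rfl, rfl⟩ : s = 1 ∧ t = 0 ∨ s = 0 ∧ t = 1 := by omega
      exacts [h₁₀, h₀₁]
    | succ m ih =>
      refine predictive_eq_polyaPredictive_of_linear hγ hpos (a := a (m + 2)) (b := b (m + 2)) hαβ
        ih fun s t hst => ?_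
      rw [hlin s t (by omega), hst]
  rcases Nat.eq_zero_or_pos (s + t) with hst | hst
  · obtain ⟨rfl, rfl⟩ : s = 0 ∧ t = 0 := by omega
    exact predictive_eq_polyaPredictive_of_succ hγ hpos hαβ h₁₀ h₀₁
  · exact hlevel (s + t - 1) s t (by omega)

end MixedMoment

lemma exists_polyaPredictive_eq {x y : ℝ} (hy : 0 < y) (hyx : y < x) (hx : x < 1) :
    ∃ α β : ℝ, 0 < α ∧ 0 < β ∧ polyaPredictive α β 1 0 = x ∧ polyaPredictive α β 0 1 = y := by
  have hxy : 0 < x - y := sub_pos.2 hyx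
  refine ⟨y / (x - y), (1 - x) / (x - y), by positivity, div_pos (by linarith) hxy, ?_, ?_⟩ <;>
  · simp only [polyaPredictive, Nat.cast_one, Nat.cast_zero]
    field_simp
    ring

section BetaMeasure

open ProbabilityTheory

variable {a b : ℝ}

lemma setIntegral_rpow_mul_one_sub_rpow_eq_beta (ha : 0 < a) (hb : 0 < b) :
    ∫ t in Set.Ioo (0 : ℝ) 1, t ^ (a - 1) * (1 - t) ^ (b - 1) = beta a b := by
  have hℂ : ((∫ t in Set.Ioo (0 : ℝ) 1, t ^ (a - 1) * (1 - t) ^ (b - 1) : ℝ) : ℂ) =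
      Complex.betaIntegral a b := by
    rw [Complex.betaIntegral, intervalIntegral.integral_of_le zero_le_one,
      ← integral_Ioc_eq_integral_Ioo, ← integral_complex_ofReal]
    refine setIntegral_congr_fun measurableSet_Ioc fun t ht => ?_
    rw [Complex.ofReal_mul, Complex.ofReal_cpow ht.1.le, Complex.ofReal_cpow (by linarith [ht.2])]
    push_cast
    ring_nf
  rw [beta_eq_betaIntegralReal a b ha hb, ← hℂ, Complex.ofReal_re]

lemma beta_add_one (ha : 0 < a) (hb : 0 < b) : beta (a + 1) b = a / (a + b) * beta a b := by
  have hab : 0 < a + b := add_pos ha hb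
  rw [beta, beta, add_right_comm, Real.Gamma_add_one ha.ne', Real.Gamma_add_one hab.ne']
  field_simp

lemma integral_betaMeasure (ha : 0 < a) (hb : 0 < b) (g : ℝ → ℝ) :
    ∫ θ, g θ ∂betaMeasure a b =
      (∫ θ in Set.Ioo (0 : ℝ) 1, g θ * (θ ^ (a - 1) * (1 - θ) ^ (b - 1))) / beta a b := by
  rw [betaMeasure, setIntegral_rpow_mul_one_sub_rpow_eq_beta ha hb,
    integral_withDensity_eq_integral_toReal_smul (by fun_prop)
      (ae_of_all _ fun _ => ENNReal.ofReal_lt_top), ← integral_div]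
  refine setIntegral_congr_fun measurableSet_Ioo fun θ hθ => ?_
  have hdens : 0 ≤ θ ^ (a - 1) * (1 - θ) ^ (b - 1) / beta a b :=
    div_nonneg (mul_nonneg (Real.rpow_nonneg hθ.1.le _) (Real.rpow_nonneg (by linarith [hθ.2]) _))
      (beta_pos ha hb).le
  rw [ENNReal.toReal_ofReal hdens, smul_eq_mul]
  ring

lemma momentOf_betaMeasure (ha : 0 < a) (hb : 0 < b) (n : ℕ) :
    momentOf (betaMeasure a b) n = beta (a + n) b / beta a b := by
  rw [momentOf, integral_betaMeasure ha hb,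
    ← setIntegral_rpow_mul_one_sub_rpow_eq_beta (a := a + n) (by positivity) hb]
  congr 1
  refine setIntegral_congr_fun measurableSet_Ioo fun θ hθ => ?_
  rw [show a + n - 1 = (a - 1) + n by ring, Real.rpow_add hθ.1, Real.rpow_natCast]
  ring

lemma momentOf_betaMeasure_succ (ha : 0 < a) (hb : 0 < b) (n : ℕ) :
    momentOf (betaMeasure a b) (n + 1) = (a + n) / (a + b + n) * momentOf (betaMeasure a b) n := by
  rw [momentOf_betaMeasure ha hb, momentOf_betaMeasure ha hb, Nat.cast_succ, ← add_assoc,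
    beta_add_one (by positivity) hb, add_right_comm a b]
  ring

lemma isProbabilityMeasure_betaMeasure (ha : 0 < a) (hb : 0 < b) :
    IsProbabilityMeasure (betaMeasure a b) := by
  have h := momentOf_betaMeasure ha hb 0
  simp only [momentOf, pow_zero, integral_const, smul_eq_mul, mul_one, Nat.cast_zero, add_zero,
    div_self (beta_pos ha hb).ne'] at h
  exact ⟨(ENNReal.toReal_eq_one_iff _).1 h⟩

lemma ae_mem_Icc_betaMeasure (a b : ℝ) : ∀ᵐ θ ∂betaMeasure a b, θ ∈ Set.Icc (0 : ℝ) 1 :=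
  (withDensity_absolutelyContinuous _ _).ae_le
    ((ae_restrict_mem measurableSet_Ioo).mono fun _ hθ => Set.Ioo_subset_Icc_self hθ)

end BetaMeasure

section DeFinetti

lemma zeroCountVec_zeroVec {n j : ℕ} (hj : j ≤ n) : zeroCountVec (zeroVec n j) = j := by
  simp [zeroCountVec, zeroVec, Fin.card_filter_val_lt, hj]

lemma card_filter_eq_true_add_zeroCountVec {n : ℕ} (x : Fin n → Bool) :
    (Finset.univ.filter fun i => x i = true).card + zeroCountVec x = n := by
  simpa [zeroCountVec] using
    Finset.card_filter_add_card_filter_not (s := Finset.univ) fun i => x i = true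

lemma zeroCountVec_eq_zeroCountVec_init_add {n : ℕ} (x : Fin (n + 1) → Bool) :
    zeroCountVec x = zeroCountVec (Fin.init x) + if x (Fin.last n) = false then 1 else 0 := by
  rw [zeroCountVec, zeroCountVec, Finset.card_filter, Finset.card_filter, Fin.sum_univ_castSucc]
  rfl

lemma toReal_measure_eq_card_mul {D : Type} [MeasurableSpace D] [MeasurableSingletonClass D]
    [Fintype D] [DecidableEq D] {X : ℕ → Ω → D} {μ : Measure Ω} (hX : ∀ i, Measurable (X i))
    {n : ℕ} (F : (Fin n → D) → Prop) [DecidablePred F] {c : ℝ}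
    (hfin : ∀ x, F x → μ {ω | ∀ i : Fin n, X i ω = x i} ≠ ⊤)
    (hc : ∀ x, F x → cylProb X μ x = c) :
    (μ {ω | F fun i : Fin n => X i ω}).toReal = (Finset.univ.filter F).card * c := by
  set v : Ω → Fin n → D := fun ω i => X i ω
  have hv : Measurable v := measurable_pi_lambda _ fun i => hX i
  have hcyl (x : Fin n → D) : {ω | ∀ i : Fin n, X i ω = x i} = v ⁻¹' {x} := by
    ext ω
    simp [v, funext_iff]
  have hset : {ω | F (v ω)} = v ⁻¹' ↑(Finset.univ.filter F) := by
    ext ω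
    simp
  rw [hset, ← sum_measure_preimage_singleton _ fun x _ => hv (measurableSet_singleton x)]
  simp_rw [← hcyl]
  rw [ENNReal.toReal_sum fun x hx => hfin x (Finset.mem_filter.1 hx).2]
  exact (Finset.sum_congr rfl fun x hx => hc x (Finset.mem_filter.1 hx).2).trans
    (by rw [Finset.sum_const, nsmul_eq_mul])

lemma card_filter_zeroCountVec_init {n p : ℕ} :
    (Finset.univ.filter fun x : Fin (n + 1) → Bool =>
        zeroCountVec x = p ∧ zeroCountVec (Fin.init x) = p).card =
      (Finset.univ.filter fun y : Fin n → Bool => zeroCountVec y = p).card := by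
  have hlast (x : Fin (n + 1) → Bool) (hx : zeroCountVec x = zeroCountVec (Fin.init x)) :
      x (Fin.last n) = true := by
    have := zeroCountVec_eq_zeroCountVec_init_add x
    cases h : x (Fin.last n) <;> simp_all
  refine Finset.card_nbij' Fin.init (Fin.snoc · true) ?_ ?_ ?_ ?_
  · intro x hx
    simp_all
  · intro y hy
    simp_all [zeroCountVec_eq_zeroCountVec_init_add (Fin.snoc y true)]
  · intro x hx
    simp only [Finset.coe_filter, Finset.mem_univ, true_and] at hx
    have h := Fin.snoc_init_self x
    rwa [hlast x (hx.1.trans hx.2.symm)] at h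
  · intro y _
    exact Fin.init_snoc _ _

variable {X : ℕ → Ω → Bool} {μ : Measure Ω} {γ : Measure ℝ}

lemma cylProb_eq_mixedMoment (hγ : IsDeFinettiMeasure X μ γ) {n : ℕ} (x : Fin n → Bool) :
    cylProb X μ x = mixedMoment γ (n - zeroCountVec x) (zeroCountVec x) := by
  have hones : (Finset.univ.filter fun i => x i = true).card = n - zeroCountVec x := by
    have := card_filter_eq_true_add_zeroCountVec x
    omega
  rw [hγ.2.2 n x, mixedMoment, hones]
  rfl

lemma mixedMoment_pos (hγ : IsDeFinettiMeasure X μ γ) (hnd : NonDeterministic X μ) (s t : ℕ) :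
    0 < mixedMoment γ s t := by
  have := hγ.1
  rcases Nat.eq_zero_or_pos (s + t) with hst | hst
  · obtain ⟨rfl, rfl⟩ : s = 0 ∧ t = 0 := by omega
    simp [mixedMoment]
  · have h := hnd (s + t) hst (zeroVec (s + t) t)
    rwa [cylProb_eq_mixedMoment hγ, zeroCountVec_zeroVec (by omega), Nat.add_sub_cancel] at h

lemma condP_eq_predictive (hX : ∀ i, Measurable (X i)) (hγ : IsDeFinettiMeasure X μ γ)
    (hnd : NonDeterministic X μ) {n p : ℕ} (hn : 1 ≤ n) (hp : p ≤ n) :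
    condP X μ n 1 p p = predictive γ (n - p) p := by
  have hfin {m : ℕ} (hm : 1 ≤ m) (x : Fin m → Bool) : μ {ω | ∀ i : Fin m, X i ω = x i} ≠ ⊤ :=
    (ENNReal.toReal_pos_iff.1 (hnd m hm x)).2.ne
  have hcard : 0 < (Finset.univ.filter fun y : Fin n → Bool => zeroCountVec y = p).card :=
    Finset.card_pos.2 ⟨zeroVec n p, by simp [zeroCountVec_zeroVec hp]⟩
  have hnum : (μ {ω | zeroCount X (n + 1) ω = p ∧ zeroCount X n ω = p}).toReal =
      (Finset.univ.filter fun y : Fin n → Bool => zeroCountVec y = p).card *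
        mixedMoment γ (n - p + 1) p := by
    rw [← card_filter_zeroCountVec_init]
    refine toReal_measure_eq_card_mul hX
      (fun x : Fin (n + 1) → Bool => zeroCountVec x = p ∧ zeroCountVec (Fin.init x) = p)
      (fun x _ => hfin (by omega) x) fun x hx => ?_
    rw [cylProb_eq_mixedMoment hγ, hx.1, show n + 1 - p = n - p + 1 by omega]
  have hden : (μ {ω | zeroCount X n ω = p}).toReal =
      (Finset.univ.filter fun y : Fin n → Bool => zeroCountVec y = p).card *
        mixedMoment γ (n - p) p := by
    refine toReal_measure_eq_card_mul hX (fun x : Fin n → Bool => zeroCountVec x = p)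
      (fun x _ => hfin hn x) fun x hx => ?_
    rw [cylProb_eq_mixedMoment hγ, hx]
  rw [condP, predictive, hnum, hden, mul_div_mul_left _ _ (by positivity)]

end DeFinetti

theorem linear_predictive_implies_beta_general
    {Ω : Type} [MeasurableSpace Ω] (μ : Measure Ω)
    (X : ℕ → Ω → Bool) (γ : Measure ℝ)
    (hexch : Exchangeable X μ) (hnd : NonDeterministic X μ)
    (hγ : IsDeFinettiMeasure X μ γ)
    (hnotiid : ¬∃ x : ℝ, γ = Measure.dirac x)
    (a b : ℕ → ℝ)
    (hlin : ∀ n : ℕ, 1 ≤ n → ∀ p : ℕ, p ≤ n →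
      condP X μ n 1 p p = a n * (p : ℝ) + b n) :
    ∃ α β : ℝ, 0 < α ∧ 0 < β ∧ γ = betaMeasure α β := by
  have := hγ.1
  have hsupp : ∀ᵐ θ ∂γ, θ ∈ Set.Icc (0 : ℝ) 1 := mem_ae_iff.2 hγ.2.1
  have hpos := mixedMoment_pos hγ hnd
  have hlin_predictive : ∀ s t, 1 ≤ s + t → predictive γ s t = a (s + t) * t + b (s + t) :=
    fun s t hst => by
      rw [← hlin _ hst t (by omega), condP_eq_predictive hexch.1 hγ hnd hst (by omega),
        Nat.add_sub_cancel]
  obtain ⟨α, β, hα, hβ, h₁₀, h₀₁⟩ := exists_polyaPredictive_eq (predictive_pos hpos 0 1)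
    (predictive_zero_one_lt_predictive_one_zero hsupp hpos hnotiid)
    (predictive_lt_one hsupp hpos 1 0)
  have hpolya := predictive_eq_polyaPredictive hsupp hpos hlin_predictive (by positivity)
    h₁₀.symm h₀₁.symm
  have := isProbabilityMeasure_betaMeasure hα hβ
  refine ⟨α, β, hα, hβ, ext_of_momentOf_eq hsupp (ae_mem_Icc_betaMeasure α β) fun n => ?_⟩
  induction n with
  | zero => simp [momentOf]
  | succ n ih =>
    rw [momentOf_betaMeasure_succ hα hβ, ← ih, ← mixedMoment_zero_right,
      mixedMoment_succ_left (hpos n 0).ne', hpolya, polyaPredictive, mixedMoment_zero_right,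
      Nat.cast_zero, add_zero]

/-- Diaconis–Ylvisaker. Let `X` be a non-deterministic infinite
exchangeable `{0,1}`-valued sequence whose de Finetti measure `γ` is not a Dirac mass.
If there are real sequences `(a_n)`, `(b_n)` such that for every `n ≥ 1` and `p = 0,…,n`
the predictive probability `P^n_{n+1}(0^{(p)} ∣ 0^{(p)})` equals `a_n p + b_n`, then `γ`
is a Beta(α,β) distribution for some `α, β > 0`. -/
theorem linear_predictive_implies_beta
    {Ω : Type} [MeasurableSpace Ω] (μ : Measure Ω) [IsProbabilityMeasure μ]
    (X : ℕ → Ω → Bool) (γ : Measure ℝ)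
    (hexch : Exchangeable X μ) (hnd : NonDeterministic X μ)
    (hγ : IsDeFinettiMeasure X μ γ)
    (hnotiid : ¬∃ x : ℝ, γ = Measure.dirac x)
    (a b : ℕ → ℝ)
    (hlin : ∀ n : ℕ, 1 ≤ n → ∀ p : ℕ, p ≤ n →
      condP X μ n 1 p p = a n * (p : ℝ) + b n) :
    ∃ α β : ℝ, 0 < α ∧ 0 < β ∧ γ = betaMeasure α β :=
  linear_predictive_implies_beta_general μ X γ hexch hnd hγ hnotiid a b hlin

end HoeffdingUrn
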